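/- Let k be an algebraically closed field of characteristic 0 and let A be a finitely generated commutative k-algebra which is an integral domain and a smooth k-algebra (the coordinate ring of a smooth irreducible affine variety X). Let M be a k-subspace of A invariant under all derivations: η(f) ∈ M for every η ∈ Der_k(A) and f ∈ M. Then M = 0, or M = k·1 (the constant functions), or M = A. In particular, as a module over the Lie algebra Der_k(A) of polynomial vector fields, A has a unique proper non-zero submodule, the 1-dimensional space of constant functions. -/

import Mathlib

/-!
If `M` contains a nonconstant `f`, the largest ideal `I ⊆ M` is nonzero and stable under
derivations: it contains every `η f`, because `b • η` is again a derivation. Both a nonzero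
element of a maximal ideal `m` killed by all derivations and a proper nonzero
derivation-stable ideal are ruled out by an order lemma at `m` (Krull's intersection theorem
gives them an exact `m`-adic order `n ≥ 1`): if `x ∈ mⁿ` and `η x ∈ mⁿ` for every `η`, then
`x ∈ mⁿ⁺¹`.

For the order lemma, let `P` be the polynomial ring on the elements of `m` and `J` its ideal of
variables; since `A/m = k`, `P → A` is onto and `J` is the preimage of `m`. Formal smoothness
lifts `A → A/mⁿ⁺²` to `σ : A → P/Jⁿ⁺²`, and `∂ⱼ ∘ σ : A → P/Jⁿ⁺¹` is a derivation. As `Ω_A` is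
projective, the hypothesis on `x` holds for all derivations into all modules, so a lift
`F ∈ Jⁿ` of `σ x` has all partial derivatives in `Jⁿ`. In characteristic zero Euler's identity
then puts `F`, hence `x`, one order higher.
-/

open MvPolynomial

section Polynomial

variable {σ R : Type*} [CommSemiring R]

theorem MvPolynomial.pderiv_mem_pow_idealOfVars {n : ℕ} {F : MvPolynomial σ R}
    (hF : F ∈ idealOfVars σ R ^ (n + 1)) (j : σ) : pderiv j F ∈ idealOfVars σ R ^ n := by
  rw [mem_pow_idealOfVars_iff'] at hF ⊢
  intro e he
  rw [coeff_pderiv, hF _ (by simpa using he), zero_mul]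

/-- Euler's identity for the lowest-degree part of `F`, in coefficient form. -/
theorem MvPolynomial.mem_pow_idealOfVars_succ_of_pderiv_mem [NoZeroDivisors R] [CharZero R]
    {n : ℕ} (hn : n ≠ 0) {F : MvPolynomial σ R} (hF : F ∈ idealOfVars σ R ^ n)
    (hpF : ∀ j, pderiv j F ∈ idealOfVars σ R ^ n) : F ∈ idealOfVars σ R ^ (n + 1) := by
  simp only [mem_pow_idealOfVars_iff'] at hF hpF ⊢
  intro d hd
  rcases (Nat.lt_succ_iff.mp hd).lt_or_eq with hlt | hdeg
  · exact hF d hlt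
  obtain ⟨j, hj⟩ : ∃ j, d j ≠ 0 := by
    by_contra! h
    exact hn (by rw [← hdeg, (Finsupp.degree_eq_zero_iff d).mpr (Finsupp.ext h)])
  obtain ⟨e, rfl⟩ : ∃ e, d = e + Finsupp.single j 1 :=
    ⟨d - Finsupp.single j 1, (tsub_add_cancel_of_le (Finsupp.single_le_iff.mpr
      (Nat.one_le_iff_ne_zero.mpr hj))).symm⟩
  have hcoeff := hpF j e (by simp at hdeg; omega)
  rw [coeff_pderiv] at hcoeff
  exact (mul_eq_zero.mp hcoeff).resolve_right (Nat.cast_add_one_ne_zero _)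

end Polynomial

theorem Module.Projective.mem_smul_top_of_forall_apply_mem {R P : Type*} [CommSemiring R]
    [AddCommMonoid P] [Module R P] [Module.Projective R P] (I : Ideal R) {z : P}
    (h : ∀ φ : P →ₗ[R] R, φ z ∈ I) : z ∈ I • (⊤ : Submodule R P) := by
  obtain ⟨s, hs⟩ := Module.projective_def.mp ‹Module.Projective R P›
  rw [← hs z, Finsupp.linearCombination_apply]
  exact Submodule.sum_mem _ fun p _ =>
    Submodule.smul_mem_smul (h ((Finsupp.lapply p).comp s)) trivial

theorem Derivation.apply_mem_smul_top_of_forall_derivation_mem {R A : Type*} [CommRing R]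
    [CommRing A] [Algebra R A] [Module.Projective A Ω[A⁄R]] {I : Ideal A} {x : A}
    (hx : ∀ η : Derivation R A A, η x ∈ I) {N : Type*} [AddCommGroup N] [Module A N]
    [Module R N] [IsScalarTower R A N] (δ : Derivation R A N) :
    δ x ∈ I • (⊤ : Submodule A N) := by
  have hD : KaehlerDifferential.D R A x ∈ I • (⊤ : Submodule A Ω[A⁄R]) :=
    Module.Projective.mem_smul_top_of_forall_apply_mem I fun φ => by
      simpa using hx (φ.compDer (KaehlerDifferential.D R A))
  rw [← δ.liftKaehlerDifferential_comp_D]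
  exact Submodule.smul_top_le_comap_smul_top I δ.liftKaehlerDifferential hD

namespace Derivation

variable {R B : Type*} [CommRing R] [CommRing B] [Algebra R B] (D : Derivation R B B)
  {I K : Ideal B}

def quotientMap (hD : ∀ x ∈ I, D x ∈ K) : B ⧸ I →ₗ[R] B ⧸ K :=
  (Submodule.liftQ (I.restrictScalars R) ((Ideal.Quotient.mkₐ R K).toLinearMap ∘ₗ D.toLinearMap)
    fun x hx => Ideal.Quotient.eq_zero_iff_mem.mpr (hD x hx)) ∘ₗ
    (Submodule.Quotient.restrictScalarsEquiv R I).symm.toLinearMap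

@[simp]
theorem quotientMap_mk (hD : ∀ x ∈ I, D x ∈ K) (x : B) :
    D.quotientMap hD (Ideal.Quotient.mk I x) = Ideal.Quotient.mk K (D x) :=
  rfl

theorem quotientMap_mul (hIK : I ≤ K) (hD : ∀ x ∈ I, D x ∈ K) (β γ : B ⧸ I) :
    D.quotientMap hD (β * γ) = Ideal.Quotient.factor hIK β * D.quotientMap hD γ +
      Ideal.Quotient.factor hIK γ * D.quotientMap hD β := by
  obtain ⟨x, rfl⟩ := Ideal.Quotient.mk_surjective β
  obtain ⟨y, rfl⟩ := Ideal.Quotient.mk_surjective γ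
  simp [← map_mul, D.leibniz]

theorem quotientMap_apply_mem_map {A : Type*} [CommRing A] [Algebra R A]
    [Module.Projective A Ω[A⁄R]] (hIK : I ≤ K) (hD : ∀ x ∈ I, D x ∈ K) (σ : A →ₐ[R] B ⧸ I)
    {L : Ideal A} {x : A} (hx : ∀ η : Derivation R A A, η x ∈ L) :
    D.quotientMap hD (σ x) ∈ L.map ((Ideal.Quotient.factorₐ R hIK).comp σ) := by
  let τ := (Ideal.Quotient.factorₐ R hIK).comp σ
  let : Algebra A (B ⧸ K) := τ.toAlgebra
  have : IsScalarTower R A (B ⧸ K) := IsScalarTower.of_algebraMap_eq' τ.comp_algebraMap.symm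
  let δ : Derivation R A (B ⧸ K) := Derivation.mk' ((D.quotientMap hD).comp σ.toLinearMap)
    fun a b => by simp [quotientMap_mul _ hIK, Algebra.smul_def, τ, RingHom.algebraMap_toAlgebra]
  have hδ := apply_mem_smul_top_of_forall_derivation_mem hx δ
  rwa [Ideal.smul_top_eq_map] at hδ

end Derivation

section SmoothLift

variable {R A P : Type*} [CommRing R] [CommRing A] [Algebra R A] [CommRing P] [Algebra R P]
  {ev : P →ₐ[R] A} {m : Ideal A} {J : Ideal P}

/-- The kernel of `P ⧸ J ^ N → A ⧸ m ^ N` lies in the nilpotent ideal `J ⧸ J ^ N`, so formal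
smoothness lifts the projection `A → A ⧸ m ^ N` to `P ⧸ J ^ N`. -/
theorem Algebra.FormallySmooth.exists_lift_quotient_pow [Algebra.FormallySmooth R A] (hev : Function.Surjective ev)
    (hJ : m.comap ev = J) {N : ℕ} (hN : N ≠ 0) :
    ∃ σ : A →ₐ[R] P ⧸ J ^ N, ∀ a F, σ a = Ideal.Quotient.mk _ F → ev F - a ∈ m ^ N := by
  subst hJ
  let p : P ⧸ m.comap ev ^ N →ₐ[R] A ⧸ m ^ N :=
    Ideal.Quotient.liftₐ _ ((Ideal.Quotient.mkₐ R (m ^ N)).comp ev) fun F hF =>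
      Ideal.Quotient.eq_zero_iff_mem.mpr (Ideal.le_comap_pow _ N hF)
  have hp : Function.Surjective p := by
    intro w
    obtain ⟨a, rfl⟩ := Ideal.Quotient.mk_surjective w
    obtain ⟨F, rfl⟩ := hev a
    exact ⟨Ideal.Quotient.mk _ F, rfl⟩
  have hker : RingHom.ker p ≤ (m.comap ev).map (Ideal.Quotient.mk _) := by
    intro β hβ
    obtain ⟨F, rfl⟩ := Ideal.Quotient.mk_surjective β
    have hF : Ideal.Quotient.mk (m ^ N) (ev F) = 0 := hβ
    exact Ideal.mem_map_of_mem _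
      (Ideal.mem_comap.mpr (Ideal.pow_le_self hN (Ideal.Quotient.eq_zero_iff_mem.mp hF)))
  have hnil : IsNilpotent (RingHom.ker p) := by
    refine ⟨N, le_bot_iff.mp ?_⟩
    calc _ ≤ ((m.comap ev).map (Ideal.Quotient.mk _)) ^ N := Ideal.pow_right_mono hker N
      _ = ⊥ := by rw [← Ideal.map_pow, Ideal.map_quotient_self]
  refine ⟨Algebra.FormallySmooth.liftOfSurjective (Ideal.Quotient.mkₐ R _) p hp hnil,
    fun a F hF => ?_⟩
  have := Algebra.FormallySmooth.liftOfSurjective_apply (Ideal.Quotient.mkₐ R _) p hp hnil a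
  rw [hF] at this
  exact Ideal.Quotient.eq.mp this

variable {N : ℕ} {σ : A →ₐ[R] P ⧸ J ^ N}

theorem map_pow_le_map_pow_of_lift (hJ : m.comap ev = J) (hN : N ≠ 0)
    (hσ : ∀ a F, σ a = Ideal.Quotient.mk _ F → ev F - a ∈ m ^ N) (i : ℕ) :
    (m ^ i).map σ ≤ (J ^ i).map (Ideal.Quotient.mk (J ^ N)) := by
  rw [Ideal.map_pow, Ideal.map_pow]
  refine Ideal.pow_right_mono (Ideal.map_le_iff_le_comap.mpr fun a ha => ?_) i
  obtain ⟨F, hF⟩ := Ideal.Quotient.mk_surjective (σ a)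
  have hevF : ev F ∈ m := by
    simpa using m.add_mem (Ideal.pow_le_self hN (hσ a F hF.symm)) ha
  rw [Ideal.mem_comap, ← hF]
  exact Ideal.mem_map_of_mem _ (hJ ▸ hevF)

theorem mem_pow_of_lift_mem_pow (hJ : m.comap ev = J)
    (hσ : ∀ a F, σ a = Ideal.Quotient.mk _ F → ev F - a ∈ m ^ N) {i : ℕ} (hi : i ≤ N) {a : A}
    {F : P} (haF : σ a = Ideal.Quotient.mk _ F) (hF : F ∈ J ^ i) : a ∈ m ^ i := by
  subst hJ
  simpa using (m ^ i).sub_mem (Ideal.le_comap_pow ev i hF)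
    (Ideal.pow_le_pow_right hi (hσ a F haF))

end SmoothLift

section PolynomialPresentation

variable {k A : Type*} [Field k] [CommRing A] [Algebra k A] {m : Ideal A}

theorem aeval_subtype_val_surjective (hres : Function.Surjective (algebraMap k (A ⧸ m))) :
    Function.Surjective (aeval ((↑) : m → A) : MvPolynomial m k →ₐ[k] A) := by
  intro a
  obtain ⟨c, hc⟩ := hres (Ideal.Quotient.mk m a)
  have hac : a - algebraMap k A c ∈ m := by
    rw [← Ideal.Quotient.eq, Ideal.Quotient.mk_algebraMap, hc]
  exact ⟨C c + X ⟨_, hac⟩, by simp⟩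

theorem comap_aeval_subtype_val (hm : m ≠ ⊤) :
    m.comap (aeval ((↑) : m → A) : MvPolynomial m k →ₐ[k] A) = idealOfVars m k := by
  have hle : idealOfVars m k ≤ m.comap (aeval ((↑) : m → A)) :=
    Ideal.span_le.mpr (Set.range_subset_iff.mpr fun t => by simp)
  refine le_antisymm (fun F hF => ?_) hle
  have hFc : F - C (constantCoeff F) ∈ idealOfVars m k := by
    rw [← pow_one (idealOfVars m k), mem_pow_idealOfVars_iff']
    intro d hd
    rw [Nat.lt_one_iff, Finsupp.degree_eq_zero_iff] at hd
    simp [hd, constantCoeff_eq]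
  have hc : algebraMap k A (constantCoeff F) ∈ m := by
    simpa using m.sub_mem hF (hle hFc)
  have hc0 : constantCoeff F = 0 := by
    by_contra h
    exact hm (m.eq_top_of_isUnit_mem hc ((isUnit_iff_ne_zero.mpr h).map _))
  simpa [hc0] using hFc

theorem mem_pow_succ_of_forall_derivation_mem [CharZero k] [Algebra.FormallySmooth k A]
    (hm : m ≠ ⊤) (hres : Function.Surjective (algebraMap k (A ⧸ m))) {n : ℕ} (hn : n ≠ 0)
    {x : A} (hx : x ∈ m ^ n) (hdx : ∀ η : Derivation k A A, η x ∈ m ^ n) :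
    x ∈ m ^ (n + 1) := by
  set J := idealOfVars m k
  have hJ := comap_aeval_subtype_val (k := k) hm
  obtain ⟨σ, hσ⟩ := Algebra.FormallySmooth.exists_lift_quotient_pow (aeval_subtype_val_surjective hres) hJ
    (N := n + 2) (by omega)
  have hσm := map_pow_le_map_pow_of_lift hJ (by omega) hσ
  obtain ⟨F, hF, hσx⟩ := (Ideal.mem_map_iff_of_surjective _ Ideal.Quotient.mk_surjective).mp
    (hσm n (Ideal.mem_map_of_mem σ hx))
  refine mem_pow_of_lift_mem_pow hJ hσ (by omega) hσx.symm
    (mem_pow_idealOfVars_succ_of_pderiv_mem hn hF fun j => ?_)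
  have hle : J ^ (n + 2) ≤ J ^ (n + 1) := Ideal.pow_le_pow_right (by omega)
  have hD := (pderiv j).quotientMap_apply_mem_map hle
    (fun G hG => pderiv_mem_pow_idealOfVars hG j) σ hdx
  have hmap : (m ^ n).map ((Ideal.Quotient.factorₐ k hle).comp σ) ≤
      (J ^ n).map (Ideal.Quotient.mk (J ^ (n + 1))) := by
    calc _ = ((m ^ n).map σ).map (Ideal.Quotient.factor hle) := (Ideal.map_map _ _).symm
      _ ≤ ((J ^ n).map (Ideal.Quotient.mk _)).map (Ideal.Quotient.factor hle) :=
          Ideal.map_mono (hσm n)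
      _ = _ := Ideal.map_map _ _
  rw [← hσx, Derivation.quotientMap_mk] at hD
  exact (Ideal.mem_quotient_iff_mem (Ideal.pow_le_pow_right (by omega))).mp (hmap hD)

end PolynomialPresentation

theorem Ideal.exists_le_pow_not_le_pow_succ {A : Type*} [CommRing A] [IsNoetherianRing A]
    [IsDomain A] {I m : Ideal A} (hI : I ≠ ⊥) (hIm : I ≤ m) (hm : m ≠ ⊤) :
    ∃ n ≠ 0, I ≤ m ^ n ∧ ¬ I ≤ m ^ (n + 1) := by
  classical
  have hex : ∃ n, ¬ I ≤ m ^ (n + 1) := by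
    by_contra! h
    refine hI (eq_bot_iff.mpr ((le_iInf fun i => ?_).trans
      (Ideal.iInf_pow_eq_bot_of_isDomain m hm).le))
    cases i with
    | zero => simp
    | succ i => exact h i
  obtain ⟨n, hn⟩ : ∃ n, Nat.find hex = n + 1 :=
    Nat.exists_eq_succ_of_ne_zero fun h0 => by simpa [h0, hIm] using Nat.find_spec hex
  exact ⟨n + 1, n.succ_ne_zero, not_not.mp (Nat.find_min hex (hn ▸ n.lt_succ_self)),
    hn ▸ Nat.find_spec hex⟩

theorem algebraMap_quotient_surjective_of_isMaximal {k A : Type*} [Field k] [IsAlgClosed k]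
    [CommRing A] [Algebra k A] [Algebra.FiniteType k A] (m : Ideal A) [m.IsMaximal] :
    Function.Surjective (algebraMap k (A ⧸ m)) := by
  let := Ideal.Quotient.field m
  have : Module.Finite k (A ⧸ m) := finite_of_finite_type_of_isJacobsonRing k (A ⧸ m)
  exact (IsAlgClosed.algebraMap_bijective_of_isIntegral (k := k)).2

section SmoothAffine

variable {k A : Type*} [Field k] [IsAlgClosed k] [CharZero k] [CommRing A] [IsDomain A]
  [Algebra k A] [Algebra.FiniteType k A] [Algebra.FormallySmooth k A]

theorem Ideal.eq_top_of_forall_derivation_mem {I : Ideal A} (hI : I ≠ ⊥)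
    (hder : ∀ η : Derivation k A A, ∀ x ∈ I, η x ∈ I) : I = ⊤ := by
  have := Algebra.FiniteType.isNoetherianRing k A
  by_contra hItop
  obtain ⟨m, hm, hIm⟩ := Ideal.exists_le_maximal I hItop
  obtain ⟨n, hn, hIn, hIn1⟩ := Ideal.exists_le_pow_not_le_pow_succ hI hIm hm.ne_top
  obtain ⟨x, hxI, hx⟩ := SetLike.not_le_iff_exists.mp hIn1
  exact hx (mem_pow_succ_of_forall_derivation_mem hm.ne_top
    (algebraMap_quotient_surjective_of_isMaximal m) hn (hIn hxI) fun η => hIn (hder η x hxI))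

theorem exists_algebraMap_eq_of_forall_derivation_eq_zero {f : A}
    (hf : ∀ η : Derivation k A A, η f = 0) : ∃ c : k, algebraMap k A c = f := by
  have := Algebra.FiniteType.isNoetherianRing k A
  obtain ⟨m, hm⟩ := Ideal.exists_maximal A
  obtain ⟨c, hc⟩ := algebraMap_quotient_surjective_of_isMaximal (k := k) m (Ideal.Quotient.mk m f)
  refine ⟨c, (sub_eq_zero.mp (by_contra fun hg => ?_)).symm⟩
  have hgm : f - algebraMap k A c ∈ m := by
    rw [← Ideal.Quotient.eq, Ideal.Quotient.mk_algebraMap, hc]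
  obtain ⟨n, hn, hgn, hgn1⟩ := Ideal.exists_le_pow_not_le_pow_succ
    (Ideal.span_singleton_eq_bot.not.mpr hg) ((Ideal.span_singleton_le_iff_mem m).mpr hgm)
    hm.ne_top
  rw [Ideal.span_singleton_le_iff_mem] at hgn hgn1
  exact hgn1 (mem_pow_succ_of_forall_derivation_mem hm.ne_top
    (algebraMap_quotient_surjective_of_isMaximal (k := k) m) hn hgn fun η => by simp [hf])

end SmoothAffine

namespace Submodule

variable {k A : Type*} [CommSemiring k] [CommRing A] [Algebra k A] (M : Submodule k A)

/-- The largest ideal of `A` contained in `M`. -/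
def idealCore : Ideal A where
  carrier := {a | ∀ b : A, b * a ∈ M}
  add_mem' ha hb b := by rw [mul_add]; exact M.add_mem (ha b) (hb b)
  zero_mem' b := by simp
  smul_mem' c a ha b := by rw [smul_eq_mul, ← mul_assoc]; exact ha (b * c)

theorem mem_of_mem_idealCore {a : A} (ha : a ∈ M.idealCore) : a ∈ M := by
  simpa using ha 1

theorem derivation_mem_idealCore {M : Submodule k A}
    (hM : ∀ η : Derivation k A A, ∀ f ∈ M, η f ∈ M) (η : Derivation k A A) {f : A}
    (hf : f ∈ M) : η f ∈ M.idealCore := fun b => by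
  simpa using hM (b • η) f hf

end Submodule

theorem invariant_subspace_trichotomy.{u}
    (k : Type u) [Field k] [IsAlgClosed k] [CharZero k]
    (A : Type u) [CommRing A] [IsDomain A] [Algebra k A] [Algebra.FiniteType k A]
    [Algebra.Smooth k A]
    (M : Submodule k A) (hM : ∀ η : Derivation k A A, ∀ f ∈ M, η f ∈ M) :
    M = ⊥ ∨ M = Submodule.span k {1} ∨ M = ⊤ := by
  by_cases hM1 : M ≤ Submodule.span k {1}
  · rcases (nonzero_span_atom (1 : A) one_ne_zero).le_iff.mp hM1 with h | h
    exacts [Or.inl h, Or.inr (Or.inl h)]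
  obtain ⟨f, hfM, hf⟩ := SetLike.not_le_iff_exists.mp hM1
  have hcore : M.idealCore ≠ ⊥ := fun h => hf <| by
    obtain ⟨c, rfl⟩ := exists_algebraMap_eq_of_forall_derivation_eq_zero (k := k) fun η => by
      simpa [h] using M.derivation_mem_idealCore hM η hfM
    exact Submodule.mem_span_singleton.mpr ⟨c, (Algebra.algebraMap_eq_smul_one c).symm⟩
  have htop : M.idealCore = ⊤ := Ideal.eq_top_of_forall_derivation_mem hcore
    fun η a ha => Submodule.derivation_mem_idealCore hM η (M.mem_of_mem_idealCore ha)
  exact Or.inr (Or.inr (eq_top_iff.mpr fun a _ => M.mem_of_mem_idealCore (htop ▸ trivial)))
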